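/- arXiv:2108.05871 — 4 statements merged into one kernel-verified Lean document; each statement's English description precedes it below -/
import Mathlib

section
/- If f and g are nonzero elements of a UFD R with greatest common divisor c, then the sequence 0 → R →^{(g/c, -f/c)} R² →^{(f g)} R → R/(f,g) → 0 is exact; in particular the kernel of the map R² → R, (a,b) ↦ af + bg, is a free R-module of rank 1 generated by (g/c, −f/c). -/
/-! If `c` is a gcd of `f = c f'` and `g = c g'`, the cofactors `f'`, `g'` are relatively prime, and
cancelling `c ≠ 0` turns a relation `a f + b g = 0` into `a f' + b g' = 0`. Then `g' ∣ a f'`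
forces `g' ∣ a`, say `a = t g'`, and cancelling `g'` gives `b = -t f'`. So the kernel of
`(a, b) ↦ a f + b g` is the line spanned by `(g', -f')`, which is the image of the injective map
`x ↦ x (g', -f')`; exactness at the other two places is the definition of the ideal `(f, g)`. -/

theorem isRelPrime_cofactors {R : Type*} [CommMonoidWithZero R] [IsLeftCancelMulZero R]
    {c f g : R} (hc : c ≠ 0) (hgcd : ∀ d : R, d ∣ c * f → d ∣ c * g → d ∣ c) :
    IsRelPrime f g := by
  intro d hdf hdg
  obtain ⟨e, he⟩ := hgcd (c * d) (mul_dvd_mul_left c hdf) (mul_dvd_mul_left c hdg)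
  refine IsUnit.of_mul_eq_one (a := d) e (mul_left_cancel₀ hc ?_)
  rw [mul_one, ← mul_assoc, ← he]

section Syzygy

variable {R : Type*} [CommRing R] [IsDomain R] [DecompositionMonoid R] {f g : R}

theorem IsRelPrime.exists_eq_smul_of_mul_add_mul_eq_zero (hfg : IsRelPrime f g) (hg : g ≠ 0)
    {a b : R} (h : a * f + b * g = 0) : ∃ t : R, (a, b) = t • (g, -f) := by
  have hga : g ∣ a * f := ⟨-b, by linear_combination h⟩
  obtain ⟨t, rfl⟩ := hfg.symm.dvd_of_dvd_mul_right hga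
  have hb : g * b = g * -(t * f) := by linear_combination h
  rw [mul_left_cancel₀ hg hb]
  exact ⟨t, by simp [mul_comm]⟩

theorem IsRelPrime.mul_add_mul_eq_zero_iff_mem_span (hfg : IsRelPrime f g) (hg : g ≠ 0)
    (v : R × R) : v.1 * f + v.2 * g = 0 ↔ v ∈ R ∙ (g, -f) := by
  rw [Submodule.mem_span_singleton]
  constructor
  · intro h
    obtain ⟨t, ht⟩ := hfg.exists_eq_smul_of_mul_add_mul_eq_zero hg h
    exact ⟨t, ht.symm⟩
  · rintro ⟨t, rfl⟩
    simp only [Prod.smul_fst, Prod.smul_snd, smul_eq_mul]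
    ring

end Syzygy

theorem ufd_resolution_two_generators_general
    (R : Type*) [CommRing R] [IsDomain R] [UniqueFactorizationMonoid R]
    (f g c f' g' : R) (hg : g ≠ 0)
    (hfc : f = c * f') (hgc : g = c * g')
    (hgcd : ∀ d : R, d ∣ f → d ∣ g → d ∣ c)
    (ψ : R →ₗ[R] R × R) (φ : (R × R) →ₗ[R] R)
    (hψ : ∀ x : R, ψ x = (x * g', -(x * f')))
    (hφ : ∀ v : R × R, φ v = v.1 * f + v.2 * g) :
    Function.Injective ψ ∧
      Function.Exact ψ φ ∧
      Function.Exact φ (Ideal.span {f, g}).mkQ ∧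
      Function.Surjective (Ideal.span {f, g}).mkQ ∧
      LinearMap.ker φ = Submodule.span R {(g', -f')} := by
  subst hfc hgc
  have hc : c ≠ 0 := left_ne_zero_of_mul hg
  have hg' : g' ≠ 0 := right_ne_zero_of_mul hg
  have hrel : IsRelPrime f' g' := isRelPrime_cofactors hc hgcd
  have hker : LinearMap.ker φ = R ∙ (g', -f') := by
    ext v
    rw [LinearMap.mem_ker, hφ, ← hrel.mul_add_mul_eq_zero_iff_mem_span hg',
      show v.1 * (c * f') + v.2 * (c * g') = c * (v.1 * f' + v.2 * g') by ring,
      mul_eq_zero, or_iff_right hc]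
  have hψ_eq : ψ = LinearMap.toSpanSingleton R (R × R) (g', -f') :=
    LinearMap.ext fun x => by simp [hψ]
  have hrange : LinearMap.range φ = Ideal.span {c * f', c * g'} := by
    ext y
    simp [Ideal.mem_span_pair, hφ]
  refine ⟨?_, ?_, ?_, Submodule.mkQ_surjective _, hker⟩
  · rw [hψ_eq]
    exact smul_left_injective R (by simp [hg'])
  · rw [LinearMap.exact_iff, hker, hψ_eq, LinearMap.range_toSpanSingleton]
  · rw [LinearMap.exact_iff, Submodule.ker_mkQ, hrange]

/-- If `f` and `g` are nonzero elements of a UFD `R` with greatest common divisor `c`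
(say `f = c * f'`, `g = c * g'`), then
`0 → R →^{(g/c, -f/c)} R² →^{(f g)} R → R/(f,g) → 0` is exact; in particular the kernel of
`(a,b) ↦ af + bg` is free of rank 1, generated by `(g/c, -f/c)`. -/
theorem ufd_resolution_two_generators
    (R : Type*) [CommRing R] [IsDomain R] [UniqueFactorizationMonoid R]
    (f g c f' g' : R) (hf : f ≠ 0) (hg : g ≠ 0)
    (hfc : f = c * f') (hgc : g = c * g')
    (hgcd : ∀ d : R, d ∣ f → d ∣ g → d ∣ c)
    (ψ : R →ₗ[R] R × R) (φ : (R × R) →ₗ[R] R)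
    (hψ : ∀ x : R, ψ x = (x * g', -(x * f')))
    (hφ : ∀ v : R × R, φ v = v.1 * f + v.2 * g) :
    Function.Injective ψ ∧
      Function.Exact ψ φ ∧
      Function.Exact φ (Ideal.span {f, g}).mkQ ∧
      Function.Surjective (Ideal.span {f, g}).mkQ ∧
      LinearMap.ker φ = Submodule.span R {(g', -f')} :=
  ufd_resolution_two_generators_general R f g c f' g' hg hfc hgc hgcd ψ φ hψ hφ
end

section
/- Let M be a finitely generated graded module of finite length over R = k[x_1,…,x_n] whose Hilbert series h_M(t) = Σ_j dim_k M_j t^j satisfies that the total length Σ_j dim_k M_j is odd. If β_{i,j}(M) denote the graded Betti numbers, so that h_M(t)·(1−t)^n = Σ_{i,j} (−1)^i β_{i,j}(M) t^j, then Σ_i β_i(M) ≥ 2^n, where β_i(M) = Σ_j β_{i,j}(M). -/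
/-!
Evaluate the identity `h_M(t)(1-t)^n = Σ (-1)^i β_{i,j} t^j` at `t = -1`. The left side becomes
`h_M(-1) · 2^n`, and `h_M(-1) ≡ h_M(1) = length M (mod 2)` is odd, hence nonzero; the right side
is bounded in absolute value by `Σ β_{i,j}`.
-/

open Polynomial

theorem Polynomial.odd_eval_neg_one_iff (p : ℤ[X]) : Odd (p.eval (-1)) ↔ Odd (p.eval 1) := by
  obtain ⟨c, hc⟩ := sub_dvd_eval_sub 1 (-1) p
  rw [show (1 : ℤ) - -1 = 2 by norm_num] at hc
  rw [show p.eval (-1) = p.eval 1 - 2 * c by omega, Int.odd_sub]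
  simp

theorem abs_eval_neg_one_alternating_sum_le (s t : Finset ℕ) (b : ℕ → ℕ → ℕ) :
    |(∑ i ∈ s, ∑ j ∈ t, (-1 : ℤ[X]) ^ i * (C (b i j : ℤ) * X ^ j)).eval (-1)| ≤
      ∑ i ∈ s, ∑ j ∈ t, (b i j : ℤ) := by
  simp only [eval_finsetSum, eval_mul, eval_pow, eval_neg, eval_one, eval_C, eval_X]
  calc _ ≤ ∑ i ∈ s, ∑ j ∈ t, |(-1 : ℤ) ^ i * ((b i j : ℤ) * (-1) ^ j)| :=
        (Finset.abs_sum_le_sum_abs _ _).trans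
          (Finset.sum_le_sum fun i _ => Finset.abs_sum_le_sum_abs _ _)
    _ = ∑ i ∈ s, ∑ j ∈ t, (b i j : ℤ) := by simp [abs_mul]

/-- Odd-length case of the Total Rank Conjecture: if `M` is a finitely generated graded
module of finite length over `k[x_1,…,x_n]`, with Hilbert function `h j = dim_k M_j`
(nonzero only for `j ≤ r`) of odd total sum, and graded Betti numbers `β i j = β_{i,j}(M)`
(nonzero only for `i ≤ n`, `j ≤ q`) satisfying the key identity
`h_M(t)·(1-t)^n = Σ_{i,j} (-1)^i β_{i,j} t^j`, then `Σ_i β_i(M) ≥ 2^n`. -/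
theorem total_rank_odd_length (n r q : ℕ) (h : ℕ → ℕ) (β : ℕ → ℕ → ℕ)
    (hodd : Odd (∑ j ∈ Finset.range (r + 1), h j))
    (hkey : (∑ j ∈ Finset.range (r + 1), (C (h j : ℤ) * X ^ j)) * (1 - X) ^ n =
      ∑ i ∈ Finset.range (n + 1), ∑ j ∈ Finset.range (q + 1),
        (-1 : ℤ[X]) ^ i * (C (β i j : ℤ) * X ^ j)) :
    2 ^ n ≤ ∑ i ∈ Finset.range (n + 1), ∑ j ∈ Finset.range (q + 1), β i j := by
  set H : ℤ[X] := ∑ j ∈ Finset.range (r + 1), C (h j : ℤ) * X ^ j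
  have hH : Odd (H.eval (-1)) := by
    rw [H.odd_eval_neg_one_iff]
    simpa [H, eval_finsetSum] using (Int.odd_coe_nat _).mpr hodd
  have hH_ne : H.eval (-1) ≠ 0 := by rintro h0; simp [h0] at hH
  have hbound :=
    abs_eval_neg_one_alternating_sum_le (Finset.range (n + 1)) (Finset.range (q + 1)) β
  rw [← hkey, eval_mul, eval_pow, eval_sub, eval_one, eval_X, abs_mul] at hbound
  have : (2 : ℤ) ^ n ≤ ∑ i ∈ Finset.range (n + 1), ∑ j ∈ Finset.range (q + 1), (β i j : ℤ) :=
    calc (2 : ℤ) ^ n = 1 * |1 - (-1 : ℤ)| ^ n := by norm_num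
      _ ≤ |H.eval (-1)| * |1 - (-1 : ℤ)| ^ n := by gcongr; exact Int.one_le_abs hH_ne
      _ ≤ _ := by rwa [abs_pow] at hbound
  exact_mod_cast this
end

section
/- If β_1 = β_0 + c − 1 and β_i = binom(β_0 + i − 3, i − 2)·binom(β_1, β_0 + i − 1) for i ≥ 2 (the Buchsbaum–Rim Betti numbers), then β_i ≥ binom(c, i) for all 0 ≤ i ≤ c, assuming β_0 ≥ 1 and c ≥ 1. -/
/-!
By symmetry `binom(β_0 + c - 1, β_0 + i - 1) = binom(β_0 + c - 1, c - i)`, which dominates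
`binom(c, c - i) = binom(c, i)`; the other factor of the Buchsbaum–Rim number is a positive
binomial coefficient because `β_0 ≥ 1`.
-/

theorem Nat.choose_le_choose_add_add {c i : ℕ} (h : i ≤ c) (b : ℕ) :
    c.choose i ≤ (c + b).choose (i + b) := by
  rw [← Nat.choose_symm h, ← Nat.choose_symm (Nat.add_le_add_right h b),
    Nat.add_sub_add_right]
  exact Nat.choose_le_add c b (c - i)

theorem buchsbaumRim_ge_BEH_general (c : ℕ) (β : ℕ → ℕ) (hβ0 : 1 ≤ β 0)
    (hβ1 : β 1 = β 0 + c - 1)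
    (hβ : ∀ i, 2 ≤ i → β i = (β 0 + i - 3).choose (i - 2) * (β 1).choose (β 0 + i - 1)) :
    ∀ i, i ≤ c → c.choose i ≤ β i := by
  obtain ⟨b, hb⟩ : ∃ b, β 0 = b + 1 := ⟨β 0 - 1, by omega⟩
  rintro (_ | _ | i) hi
  · simpa using hβ0
  · simp only [zero_add, Nat.choose_one_right]; omega
  · have hβ1' : β 1 = c + b := by omega
    have hindex : β 0 + (i + 2) - 1 = i + 2 + b := by omega
    rw [hβ (i + 2) (by omega), hβ1', hindex]
    calc c.choose (i + 2) ≤ (c + b).choose (i + 2 + b) := Nat.choose_le_choose_add_add hi b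
      _ ≤ _ := Nat.le_mul_of_pos_left _ (Nat.choose_pos (by omega))

/-- If `β_1 = β_0 + c - 1` and `β_i = binom(β_0+i-3, i-2) * binom(β_1, β_0+i-1)` for `i ≥ 2`
(the Buchsbaum–Rim Betti numbers), then `β_i ≥ binom(c,i)` for all `0 ≤ i ≤ c`,
assuming `β_0 ≥ 1` and `c ≥ 1`. -/
theorem buchsbaumRim_ge_BEH (c : ℕ) (hc : 1 ≤ c) (β : ℕ → ℕ) (hβ0 : 1 ≤ β 0)
    (hβ1 : β 1 = β 0 + c - 1)
    (hβ : ∀ i, 2 ≤ i → β i = (β 0 + i - 3).choose (i - 2) * (β 1).choose (β 0 + i - 1)) :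
    ∀ i, i ≤ c → c.choose i ≤ β i :=
  buchsbaumRim_ge_BEH_general c β hβ0 hβ1 hβ
end

section
/- If M is a finitely generated graded module over R = k[x_1,…,x_n] of finite length with Σ_j dim_k M_j odd, and M is not free, then the total Betti number satisfies Σ_i β_i(M) ≥ 2^n ≥ n + 1. -/
open Polynomial in
/-- Weak corollary of the odd-length lemma: if `M` is a finitely generated graded module of
finite length over `k[x_1,…,x_n]` with odd total length (Hilbert function `h`, graded Betti
numbers `β` related by the key identity `h_M(t)(1-t)^n = Σ_{i,j}(-1)^i β_{i,j} t^j`) and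
`M` is not free (some `β i j ≠ 0` with `i ≥ 1`), then the total Betti number satisfies
`Σ_i β_i(M) ≥ 2^n ≥ n + 1`; in particular the total is at least `binom(n,0) + binom(n,n) = 2`. -/
theorem total_rank_odd_length_weak (n r q : ℕ) (h : ℕ → ℕ) (β : ℕ → ℕ → ℕ)
    (hodd : Odd (∑ j ∈ Finset.range (r + 1), h j))
    (hkey : (∑ j ∈ Finset.range (r + 1), (C (h j : ℤ) * X ^ j)) * (1 - X) ^ n =
      ∑ i ∈ Finset.range (n + 1), ∑ j ∈ Finset.range (q + 1),
        (-1 : ℤ[X]) ^ i * (C (β i j : ℤ) * X ^ j))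
    (hnotfree : ∃ i ∈ Finset.range (n + 1), 1 ≤ i ∧
      ∃ j ∈ Finset.range (q + 1), β i j ≠ 0) :
    2 ^ n ≤ ∑ i ∈ Finset.range (n + 1), ∑ j ∈ Finset.range (q + 1), β i j ∧
      n + 1 ≤ 2 ^ n ∧
      n.choose 0 + n.choose n ≤
        ∑ i ∈ Finset.range (n + 1), ∑ j ∈ Finset.range (q + 1), β i j := by
  -- evaluate the key identity at -1
  have heval := congrArg (Polynomial.eval (-1 : ℤ)) hkey
  simp only [eval_mul, eval_pow, eval_sub, eval_one, eval_X, eval_neg, eval_finset_sum, eval_C] at heval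
  have h2 : (1 : ℤ) - (-1) = 2 := by norm_num
  rw [h2] at heval
  set A : ℤ := ∑ j ∈ Finset.range (r + 1), (h j : ℤ) * (-1) ^ j with hA
  -- A is odd
  have hAodd : Odd A := by
    rw [Int.odd_iff]
    have : A % 2 = (∑ j ∈ Finset.range (r + 1), (h j : ℤ)) % 2 := by
      rw [hA, Finset.sum_int_mod, Finset.sum_int_mod (f := fun j => (h j : ℤ))]
      congr 1
      apply Finset.sum_congr rfl
      intro j _
      have : ((h j : ℤ) * (-1) ^ j) % 2 = ((h j : ℤ) * 1 ^ j) % 2 :=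
        Int.ModEq.mul_left _ (Int.ModEq.pow j (by decide))
      simpa using this
    rw [this, ← Int.odd_iff]
    exact_mod_cast hodd
  have hA1 : 1 ≤ |A| := Int.one_le_abs (by rcases hAodd with ⟨k, hk⟩; omega)
  -- bound the right side
  set S : ℕ := ∑ i ∈ Finset.range (n + 1), ∑ j ∈ Finset.range (q + 1), β i j with hS
  have hbound : |(∑ i ∈ Finset.range (n + 1), ∑ j ∈ Finset.range (q + 1),
      (-1 : ℤ) ^ i * ((β i j : ℤ) * (-1) ^ j))| ≤ (S : ℤ) := by
    calc |(∑ i ∈ Finset.range (n + 1), ∑ j ∈ Finset.range (q + 1),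
        (-1 : ℤ) ^ i * ((β i j : ℤ) * (-1) ^ j))|
        ≤ ∑ i ∈ Finset.range (n + 1), |∑ j ∈ Finset.range (q + 1),
          (-1 : ℤ) ^ i * ((β i j : ℤ) * (-1) ^ j)| := Finset.abs_sum_le_sum_abs _ _
      _ ≤ ∑ i ∈ Finset.range (n + 1), ∑ j ∈ Finset.range (q + 1),
          |(-1 : ℤ) ^ i * ((β i j : ℤ) * (-1) ^ j)| :=
          Finset.sum_le_sum fun i _ => Finset.abs_sum_le_sum_abs _ _
      _ = (S : ℤ) := by
          rw [hS]
          push_cast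
          apply Finset.sum_congr rfl
          intro i _
          apply Finset.sum_congr rfl
          intro j _
          rw [abs_mul, abs_mul, abs_pow, abs_pow, abs_neg, abs_one, one_pow, one_pow,
            mul_one, one_mul, Int.abs_natCast]
  have hmain : (2 : ℤ) ^ n ≤ (S : ℤ) := by
    calc (2 : ℤ) ^ n = 1 * 2 ^ n := (one_mul _).symm
      _ ≤ |A| * 2 ^ n := mul_le_mul_of_nonneg_right hA1 (by positivity)
      _ = |A * 2 ^ n| := by rw [abs_mul, abs_pow]; norm_num
      _ = _ := by rw [heval]
      _ ≤ (S : ℤ) := hbound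
  have hmainN : 2 ^ n ≤ S := by exact_mod_cast hmain
  -- n ≥ 1
  obtain ⟨i, hi, h1i, -⟩ := hnotfree
  have hn1 : 1 ≤ n := by
    simp only [Finset.mem_range] at hi; omega
  refine ⟨hmainN, Nat.lt_two_pow_self (n := n), ?_⟩
  have : n.choose 0 + n.choose n = 2 := by simp
  rw [this]
  calc 2 = 2 ^ 1 := rfl
    _ ≤ 2 ^ n := Nat.pow_le_pow_right (by norm_num) hn1
    _ ≤ S := hmainN
end
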